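/- Let ABC be a triangle, K an interior point with isogonal conjugate K₁, DEF the pedal triangle of K₁ with respect to ABC, and TUV the antipedal triangle of K with respect to ABC. Then area(DEF) · area(TUV) = (area ABC)². -/

import Mathlib

open EuclideanGeometry Real

noncomputable def triArea (X Y Z : EuclideanSpace ℝ (Fin 2)) : ℝ :=
  |(Y 0 - X 0) * (Z 1 - X 1) - (Y 1 - X 1) * (Z 0 - X 0)| / 2

/-- `F` is the foot of the perpendicular from `P` to the line through `X` and `Y`. -/
def IsFoot (P F X Y : EuclideanSpace ℝ (Fin 2)) : Prop :=
  F ∈ affineSpan ℝ ({X, Y} : Set (EuclideanSpace ℝ (Fin 2))) ∧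
    inner ℝ (P - F) (Y - X) = (0 : ℝ)

/-- `K₁` is the isogonal conjugate of `K` with respect to triangle `ABC`. -/
def IsIsogonalConj (A B C K K₁ : EuclideanSpace ℝ (Fin 2)) : Prop :=
  ∠ K₁ A B = ∠ K A C ∧ ∠ K₁ B C = ∠ K B A ∧ ∠ K₁ C A = ∠ K C B

/-!
Because `AK₁` and `AK` are isogonal, the feet `E`, `F` of `K₁` on `AC`, `AB` span a chord
perpendicular to `AK`, hence parallel to the antipedal side `UV`; likewise at `B` and `C`. So the
pedal triangle `DEF` is homothetic to `TUV`, and for nested triangles `DEF ⊂ ABC ⊂ TUV` with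
parallel outer and inner triangles the homothety ratio equals the area ratio `[ABC] / [TUV]`,
which gives `[DEF] · [TUV] = [ABC]²`.

The angles in the hypothesis are unoriented, so at each vertex they only determine the ray from
the vertex to `K₁` up to reflection in a side line. The correct ray is forced because `K₁` cannot
lie strictly outside all three side lines, while lying inside one of them propagates around the
triangle.
-/

local notation "E2" => EuclideanSpace ℝ (Fin 2)

def cross (x y : E2) : ℝ := x 0 * y 1 - x 1 * y 0

lemma triArea_eq_abs_cross (X Y Z : E2) : triArea X Y Z = |cross (Y - X) (Z - X)| / 2 := rfl

lemma inner_eq_coords (x y : E2) : inner ℝ x y = x 0 * y 0 + x 1 * y 1 := by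
  simp [PiLp.inner_apply, Fin.sum_univ_two, mul_comm]

lemma norm_sq_eq_coords (x : E2) : ‖x‖ ^ 2 = x 0 ^ 2 + x 1 ^ 2 := by
  rw [← real_inner_self_eq_norm_sq, inner_eq_coords]; ring

lemma lineMap_apply_coord (X Y : E2) (r : ℝ) (i : Fin 2) :
    AffineMap.lineMap X Y r i = X i + r * (Y i - X i) := by
  simp only [AffineMap.lineMap_apply_module, PiLp.add_apply, PiLp.smul_apply, smul_eq_mul]; ring

lemma abs_cross_eq_sin_angle_mul_norm_mul_norm (x y : E2) :
    |cross x y| = Real.sin (InnerProductGeometry.angle x y) * (‖x‖ * ‖y‖) := by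
  rw [InnerProductGeometry.sin_angle_mul_norm_mul_norm, ← Real.sqrt_sq_eq_abs]
  congr 1
  simp only [inner_eq_coords, cross]; ring

lemma cross_ne_zero_of_affineIndependent {A B C : E2} (h : AffineIndependent ℝ ![A, B, C]) :
    cross (B - A) (C - A) ≠ 0 := by
  have hli : ∀ s t : ℝ, s • (B - A) + t • (C - A) = 0 → s = 0 ∧ t = 0 := by
    intro s t hst
    have := h.eq_zero_of_sum_eq_zero (s := Finset.univ) (w := ![-(s + t), s, t])
      (by simp [Fin.sum_univ_three])
      (by rw [← hst]; simp only [Fin.sum_univ_three, Matrix.cons_val_zero, Matrix.cons_val_one,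
        Matrix.cons_val]; module)
    exact ⟨this 1 (by simp), this 2 (by simp)⟩
  intro h0
  simp only [cross] at h0
  have h1 := hli ((C - A) 1) (-(B - A) 1) (by
    ext i; fin_cases i <;> simp only [Fin.zero_eta, Fin.mk_one, PiLp.add_apply, PiLp.smul_apply,
      smul_eq_mul, PiLp.zero_apply] <;> linarith)
  have h2 := hli ((C - A) 0) (-(B - A) 0) (by
    ext i; fin_cases i <;> simp only [Fin.zero_eta, Fin.mk_one, PiLp.add_apply, PiLp.smul_apply,
      smul_eq_mul, PiLp.zero_apply] <;> linarith)
  have h3 := hli 1 0 (by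
    ext i; fin_cases i <;> simp only [Fin.zero_eta, Fin.mk_one, one_smul, zero_smul, add_zero,
      PiLp.zero_apply] <;> linarith [h1.2, h2.2])
  exact one_ne_zero h3.1

lemma exists_pos_weights_of_mem_interior_convexHull {A B C K : E2}
    (h : AffineIndependent ℝ ![A, B, C]) (hK : K ∈ interior (convexHull ℝ {A, B, C})) :
    ∃ α β γ : ℝ, 0 < α ∧ 0 < β ∧ 0 < γ ∧ α + β + γ = 1 ∧ K = α • A + β • B + γ • C := by
  let b : AffineBasis (Fin 3) ℝ E2 :=
    ⟨![A, B, C], h, h.affineSpan_eq_top_iff_card_eq_finrank_add_one.mpr (by simp)⟩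
  have hrange : Set.range b = {A, B, C} := by
    change Set.range ![A, B, C] = _
    rw [Matrix.range_cons, Matrix.range_cons_cons_empty, Set.singleton_union]
  rw [← hrange, b.interior_convexHull] at hK
  refine ⟨b.coord 0 K, b.coord 1 K, b.coord 2 K, hK 0, hK 1, hK 2, ?_, ?_⟩
  · simpa only [Fin.sum_univ_three] using b.sum_coord_apply_eq_one K
  · have := b.linear_combination_coord_eq_self K
    rw [Fin.sum_univ_three] at this
    exact this.symm

lemma mul_cross_pos_of_mem_interior_convexHull {A B C K : E2}
    (h : AffineIndependent ℝ ![A, B, C]) (hK : K ∈ interior (convexHull ℝ {A, B, C})) :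
    0 < cross (B - A) (C - A) * cross (B - A) (K - A) ∧
      0 < cross (B - A) (C - A) * cross (C - B) (K - B) ∧
      0 < cross (B - A) (C - A) * cross (A - C) (K - C) := by
  obtain ⟨α, β, γ, hα, hβ, hγ, hsum, rfl⟩ := exists_pos_weights_of_mem_interior_convexHull h hK
  obtain rfl : α = 1 - β - γ := by linarith
  have hS : 0 < cross (B - A) (C - A) ^ 2 := by
    have := cross_ne_zero_of_affineIndependent h
    positivity
  refine ⟨(mul_pos hγ hS).trans_eq ?_, (mul_pos hα hS).trans_eq ?_, (mul_pos hβ hS).trans_eq ?_⟩ <;>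
    simp only [cross, PiLp.sub_apply, PiLp.add_apply, PiLp.smul_apply, smul_eq_mul] <;> ring

open InnerProductGeometry in
lemma inner_cross_mul_norm_eq_of_angle_eq {x y x' y' : E2}
    (h : InnerProductGeometry.angle x y = InnerProductGeometry.angle x' y')
    (hsign : 0 ≤ cross x y * cross x' y') :
    inner ℝ x y * (‖x'‖ * ‖y'‖) = inner ℝ x' y' * (‖x‖ * ‖y‖) ∧
      cross x y * (‖x'‖ * ‖y'‖) = cross x' y' * (‖x‖ * ‖y‖) := by
  constructor
  · rw [← cos_angle_mul_norm_mul_norm x y, ← cos_angle_mul_norm_mul_norm x' y', h]; ring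
  · have habs : |cross x y * (‖x'‖ * ‖y'‖)| = |cross x' y' * (‖x‖ * ‖y‖)| := by
      rw [abs_mul (cross x y), abs_mul (cross x' y'),
        abs_of_nonneg (by positivity : 0 ≤ ‖x'‖ * ‖y'‖),
        abs_of_nonneg (by positivity : 0 ≤ ‖x‖ * ‖y‖),
        abs_cross_eq_sin_angle_mul_norm_mul_norm, abs_cross_eq_sin_angle_mul_norm_mul_norm, h]
      ring
    rcases abs_eq_abs.mp habs with heq | heq
    · exact heq
    · nlinarith [mul_nonneg hsign (by positivity : (0 : ℝ) ≤ ‖x'‖ * ‖y'‖ * (‖x‖ * ‖y‖))]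

/- `u`, `v` span the angle at a vertex, `p` points strictly into it and `q` along its isogonal;
the identity is `⟪proj_v q - proj_u q, p⟫ = 0` with denominators cleared. -/
lemma cross_nonneg_and_inner_eq_of_angle_eq {u v p q : E2} {s : ℝ} (hpu : 0 < s * cross u p)
    (hpv : 0 < s * cross p v)
    (hang : InnerProductGeometry.angle q u = InnerProductGeometry.angle p v)
    (hqu : 0 ≤ s * cross u q) :
    0 ≤ s * cross q v ∧
      inner ℝ q v * inner ℝ p v * ‖u‖ ^ 2 = inner ℝ q u * inner ℝ p u * ‖v‖ ^ 2 := by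
  have hu : u ≠ 0 := by rintro rfl; simp [cross] at hpu
  have hp : p ≠ 0 := by rintro rfl; simp [cross] at hpv
  have hv : v ≠ 0 := by rintro rfl; simp [cross] at hpv
  have hsign : 0 ≤ cross u q * cross p v := by
    have hs : s ≠ 0 := by rintro rfl; simp at hpu
    refine nonneg_of_mul_nonneg_right ?_ (by positivity : 0 < s ^ 2)
    linear_combination mul_nonneg hqu hpv.le
  obtain ⟨hcos, hsin⟩ := inner_cross_mul_norm_eq_of_angle_eq
    (by rwa [InnerProductGeometry.angle_comm]) hsign
  have hpv0 : 0 < ‖p‖ * ‖v‖ := by positivity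
  constructor
  · have hqv : ‖u‖ ^ 2 * cross q v = inner ℝ u q * cross u v - cross u q * inner ℝ u v := by
      rw [norm_sq_eq_coords]; simp only [cross, inner_eq_coords]; ring
    have hup : ‖v‖ ^ 2 * cross u p = inner ℝ p v * cross u v - cross p v * inner ℝ u v := by
      rw [norm_sq_eq_coords]; simp only [cross, inner_eq_coords]; ring
    have key : s * cross q v * (‖u‖ ^ 2 * (‖p‖ * ‖v‖)) =
        ‖u‖ * ‖q‖ * ‖v‖ ^ 2 * (s * cross u p) := by
      linear_combination s * (‖p‖ * ‖v‖) * hqv - s * (‖u‖ * ‖q‖) * hup + s * cross u v * hcos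
        - s * inner ℝ u v * hsin
    refine nonneg_of_mul_nonneg_left ?_ (by positivity : 0 < ‖u‖ ^ 2 * (‖p‖ * ‖v‖))
    rw [key]
    positivity
  · have hX : inner ℝ q v * inner ℝ p v * ‖u‖ ^ 2 - inner ℝ q u * inner ℝ p u * ‖v‖ ^ 2 =
        cross u v * (inner ℝ p v * cross u q - inner ℝ u q * cross p v) := by
      rw [norm_sq_eq_coords, norm_sq_eq_coords]; simp only [cross, inner_eq_coords]; ring
    refine mul_right_cancel₀ hpv0.ne' ?_
    linear_combination (‖p‖ * ‖v‖) * hX + cross u v * inner ℝ p v * hsin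
      - cross u v * cross p v * hcos

lemma IsFoot.symm {P F X Y : E2} (h : IsFoot P F X Y) : IsFoot P F Y X := by
  refine ⟨by rw [Set.pair_comm]; exact h.1, ?_⟩
  rw [← neg_sub Y X, inner_neg_right, h.2, neg_zero]

lemma IsFoot.norm_sq_smul_sub {P F X Y : E2} (h : IsFoot P F X Y) :
    ‖Y - X‖ ^ 2 • (F - X) = inner ℝ (P - X) (Y - X) • (Y - X) := by
  obtain ⟨r, rfl⟩ := mem_affineSpan_pair_iff_exists_lineMap_eq.mp h.1
  have hF : AffineMap.lineMap X Y r - X = r • (Y - X) := by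
    rw [AffineMap.lineMap_apply_module]; module
  have h2 := h.2
  rw [← sub_sub_sub_cancel_right P _ X, hF, inner_sub_left, inner_smul_left,
    real_inner_self_eq_norm_sq, sub_eq_zero] at h2
  rw [hF, smul_smul, h2]
  simp [mul_comm]

lemma inner_sub_eq_zero_of_isFoot {A B C P Q E F : E2} (hE : IsFoot Q E C A) (hF : IsFoot Q F A B)
    (hB : B ≠ A) (hC : C ≠ A)
    (h : inner ℝ (Q - A) (C - A) * inner ℝ (P - A) (C - A) * ‖B - A‖ ^ 2 =
      inner ℝ (Q - A) (B - A) * inner ℝ (P - A) (B - A) * ‖C - A‖ ^ 2) :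
    inner ℝ (A - P) (E - F) = 0 := by
  have hE' := congrArg (inner ℝ (A - P)) hE.symm.norm_sq_smul_sub
  have hF' := congrArg (inner ℝ (A - P)) hF.norm_sq_smul_sub
  simp only [inner_smul_right] at hE' hF'
  have hBA : ‖B - A‖ ^ 2 ≠ 0 := by simpa [sub_eq_zero] using hB
  have hCA : ‖C - A‖ ^ 2 ≠ 0 := by simpa [sub_eq_zero] using hC
  rw [show E - F = (E - A) - (F - A) by abel, inner_sub_right]
  refine mul_left_cancel₀ (mul_ne_zero hBA hCA) ?_
  rw [← neg_sub P A, inner_neg_left, inner_neg_left] at hE' hF' ⊢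
  linear_combination ‖B - A‖ ^ 2 * hE' - ‖C - A‖ ^ 2 * hF' - h

lemma cross_eq_zero_of_inner_eq_zero {p x y : E2} (hp : p ≠ 0) (hx : inner ℝ p x = 0)
    (hy : inner ℝ p y = 0) : cross x y = 0 := by
  have h : cross x y * ‖p‖ ^ 2 = inner ℝ p x * cross p y - cross p x * inner ℝ p y := by
    rw [norm_sq_eq_coords]; simp only [cross, inner_eq_coords]; ring
  rw [hx, hy] at h
  simpa [hp] using h

lemma cross_nonneg_and_pedal_parallel_of_angle_eq {A B C K K₁ E F w : E2} {s : ℝ}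
    (hKAB : 0 < s * cross (B - A) (K - A)) (hKCA : 0 < s * cross (A - C) (K - C))
    (hang : ∠ K₁ A B = ∠ K A C) (hE : IsFoot K₁ E C A) (hF : IsFoot K₁ F A B)
    (hw : inner ℝ (A - K) w = 0) (hside : 0 ≤ s * cross (B - A) (K₁ - A)) :
    0 ≤ s * cross (A - C) (K₁ - C) ∧ cross (E - F) w = 0 := by
  have hrot : ∀ X : E2, cross (X - A) (C - A) = cross (A - C) (X - C) := fun X => by
    simp only [cross, PiLp.sub_apply]; ring
  rw [← hrot] at hKCA ⊢
  obtain ⟨hside', hperp⟩ := cross_nonneg_and_inner_eq_of_angle_eq hKAB hKCA hang hside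
  have hB : B ≠ A := by rintro rfl; simp [cross] at hKAB
  have hC : C ≠ A := by rintro rfl; simp [cross] at hKCA
  have hK : A - K ≠ 0 := by rw [sub_ne_zero]; rintro rfl; simp [cross] at hKAB
  exact ⟨hside',
    cross_eq_zero_of_inner_eq_zero hK (inner_sub_eq_zero_of_isFoot hE hF hB hC hperp) hw⟩

lemma nonneg_of_imp_cycle {x y z : ℝ} (h : 0 < x + y + z) (hxy : 0 ≤ x → 0 ≤ y)
    (hyz : 0 ≤ y → 0 ≤ z) (hzx : 0 ≤ z → 0 ≤ x) : 0 ≤ x ∧ 0 ≤ y ∧ 0 ≤ z := by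
  have hx : 0 ≤ x := by
    by_contra! hx
    have hz : z < 0 := lt_of_not_ge fun hz => hx.not_ge (hzx hz)
    have hy : y < 0 := lt_of_not_ge fun hy => hz.not_ge (hyz hy)
    linarith
  exact ⟨hx, hxy hx, hyz (hxy hx)⟩

lemma cross_add_cross_add_cross (A B C P : E2) :
    cross (B - A) (P - A) + cross (A - C) (P - C) + cross (C - B) (P - B) =
      cross (B - A) (C - A) := by
  simp only [cross, PiLp.sub_apply]; ring

lemma cross_mul_cross_eq_sq_of_inscribed {T U V A B C D E F : E2}
    (hA : A ∈ line[ℝ, V, U]) (hB : B ∈ line[ℝ, T, V]) (hC : C ∈ line[ℝ, T, U])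
    (hD : D ∈ line[ℝ, B, C]) (hE : E ∈ line[ℝ, C, A]) (hF : F ∈ line[ℝ, A, B])
    (hEF : cross (E - F) (U - V) = 0) (hFD : cross (F - D) (V - T) = 0)
    (hDE : cross (D - E) (U - T) = 0) :
    cross (E - D) (F - D) * cross (U - T) (V - T) = cross (B - A) (C - A) ^ 2 := by
  obtain ⟨a, hA⟩ := mem_affineSpan_pair_iff_exists_lineMap_eq.mp hA
  obtain ⟨b, hB⟩ := mem_affineSpan_pair_iff_exists_lineMap_eq.mp hB
  obtain ⟨c, hC⟩ := mem_affineSpan_pair_iff_exists_lineMap_eq.mp hC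
  obtain ⟨d, hD⟩ := mem_affineSpan_pair_iff_exists_lineMap_eq.mp hD
  obtain ⟨e, hE⟩ := mem_affineSpan_pair_iff_exists_lineMap_eq.mp hE
  obtain ⟨f, hF⟩ := mem_affineSpan_pair_iff_exists_lineMap_eq.mp hF
  have hABC : cross (B - A) (C - A) = (a * b - a * c - b * c + c) * cross (U - T) (V - T) := by
    subst hA hB hC; simp only [cross, PiLp.sub_apply, lineMap_apply_coord]; ring
  have hDEF : cross (E - D) (F - D) = ((a * e - c * d - c * e + c) *
      (a * f - a + b * d + b * f - b - f + 1) + (a - a * f - c * d) * (a * e - b * d + b - e)) *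
      cross (U - T) (V - T) := by
    subst hA hB hC hD hE hF; simp only [cross, PiLp.sub_apply, lineMap_apply_coord]; ring
  replace hEF : (b * f + c * e - c - e - f + 1) * cross (U - T) (V - T) = 0 := by
    subst hA hB hC hD hE hF; simp only [cross, PiLp.sub_apply, lineMap_apply_coord] at hEF ⊢
    linear_combination hEF
  replace hFD : (a - a * f - c * d) * cross (U - T) (V - T) = 0 := by
    subst hA hB hC hD hE hF; simp only [cross, PiLp.sub_apply, lineMap_apply_coord] at hFD ⊢
    linear_combination hFD
  replace hDE : (a * e - b * d + b - e) * cross (U - T) (V - T) = 0 := by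
    subst hA hB hC hD hE hF; simp only [cross, PiLp.sub_apply, lineMap_apply_coord] at hDE ⊢
    linear_combination -hDE
  rw [hDEF, hABC]
  -- In the frame `(T; U - T, V - T)`, `E - D` and `F - D` are `k • (U - T)` and `k • (V - T)`,
  -- with the same `k = ab - ac - bc + c` that is the frame area of `ABC`.
  generalize cross (U - T) (V - T) = χ at hEF hFD hDE ⊢
  have hk : (a * e - c * d - c * e + c) * χ = (a * b - a * c - b * c + c) * χ := by
    linear_combination -a * hEF + (1 - b) * hFD + c * hDE
  have hk' : (a * f - a + b * d + b * f - b - f + 1) * χ = (a * b - a * c - b * c + c) * χ := by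
    linear_combination (1 - a) * hEF - b * hFD + (c - 1) * hDE
  linear_combination (a * f - a + b * d + b * f - b - f + 1) * χ * hk
    + (a * b - a * c - b * c + c) * χ * hk' + (a * e - b * d + b - e) * χ * hFD

theorem pedal_antipedal_product (A B C K K₁ D E F T U V : EuclideanSpace ℝ (Fin 2))
    (hABC : AffineIndependent ℝ ![A, B, C])
    (hK : K ∈ interior (convexHull ℝ ({A, B, C} : Set (EuclideanSpace ℝ (Fin 2)))))
    (hK₁ : IsIsogonalConj A B C K K₁)
    (hD : IsFoot K₁ D B C) (hE : IsFoot K₁ E C A) (hF : IsFoot K₁ F A B)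
    (hA : A ∈ affineSpan ℝ ({V, U} : Set (EuclideanSpace ℝ (Fin 2))))
    (hAperp : inner ℝ (A - K) (U - V) = (0 : ℝ))
    (hB : B ∈ affineSpan ℝ ({T, V} : Set (EuclideanSpace ℝ (Fin 2))))
    (hBperp : inner ℝ (B - K) (V - T) = (0 : ℝ))
    (hCmem : C ∈ affineSpan ℝ ({T, U} : Set (EuclideanSpace ℝ (Fin 2))))
    (hCperp : inner ℝ (C - K) (U - T) = (0 : ℝ)) :
    triArea D E F * triArea T U V = (triArea A B C) ^ 2 := by
  obtain ⟨hangA, hangB, hangC⟩ := hK₁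
  obtain ⟨hKAB, hKBC, hKCA⟩ := mul_cross_pos_of_mem_interior_convexHull hABC hK
  have vA := cross_nonneg_and_pedal_parallel_of_angle_eq hKAB hKCA hangA hE hF hAperp
  have vB := cross_nonneg_and_pedal_parallel_of_angle_eq hKBC hKAB hangB hF hD hBperp
  have vC := cross_nonneg_and_pedal_parallel_of_angle_eq hKCA hKBC hangC hD hE hCperp
  have hsum : 0 < cross (B - A) (C - A) * cross (B - A) (K₁ - A) +
      cross (B - A) (C - A) * cross (A - C) (K₁ - C) +
      cross (B - A) (C - A) * cross (C - B) (K₁ - B) := by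
    rw [← mul_add, ← mul_add, cross_add_cross_add_cross]
    exact mul_self_pos.mpr (left_ne_zero_of_mul hKAB.ne')
  obtain ⟨hsAB, hsCA, hsBC⟩ :=
    nonneg_of_imp_cycle hsum (fun h => (vA h).1) (fun h => (vC h).1) (fun h => (vB h).1)
  have key := cross_mul_cross_eq_sq_of_inscribed hA hB hCmem hD.1 hE.1 hF.1
    (vA hsAB).2 (vB hsBC).2 (vC hsCA).2
  rw [triArea_eq_abs_cross, triArea_eq_abs_cross, triArea_eq_abs_cross, div_mul_div_comm,
    ← abs_mul, key, abs_sq, div_pow, sq_abs]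
  norm_num
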